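/- In a weakly norming graph H without isolated vertices, every connected component has the same average degree 2·e(H)/v(H). -/

import Mathlib

open MeasureTheory

noncomputable def sym2Val {V Ω : Type*} (W : Ω → Ω → ℝ) (x : V → Ω) : Sym2 V → ℝ :=
  Sym2.lift ⟨fun i j => (W (x i) (x j) + W (x j) (x i)) / 2, fun i j => by simp [add_comm]⟩

/-- Homomorphism density `t(G, W)` of a graph `G` in a symmetric kernel `W`. -/
noncomputable def homDensity {V : Type} [Fintype V] {Ω : Type*} [MeasurableSpace Ω]
    (G : SimpleGraph V) (μ : Measure Ω) (W : Ω → Ω → ℝ) : ℝ :=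
  ∫ x : V → Ω, ∏ᶠ e ∈ G.edgeSet, sym2Val W x e ∂(Measure.pi fun _ => μ)

/-- Decorated homomorphism density `t(G, w)` for a decoration `w` of the edges. -/
noncomputable def decDensity {V : Type} [Fintype V] {Ω : Type*} [MeasurableSpace Ω]
    (G : SimpleGraph V) (μ : Measure Ω) (w : Sym2 V → Ω → Ω → ℝ) : ℝ :=
  ∫ x : V → Ω, ∏ᶠ e ∈ G.edgeSet, sym2Val (w e) x e ∂(Measure.pi fun _ => μ)

/-- Bounded symmetric measurable kernel. -/
def GoodKernel {Ω : Type*} [MeasurableSpace Ω] (W : Ω → Ω → ℝ) : Prop :=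
  Measurable (Function.uncurry W) ∧ (∀ x y, W x y = W y x) ∧ ∃ C, ∀ x y, |W x y| ≤ C

/-- Hatami's Hölder-type characterisation of weakly norming graphs. -/
def WeaklyNorming {V : Type} [Fintype V] (G : SimpleGraph V) : Prop :=
  ∀ (Ω : Type) (_ : MeasurableSpace Ω) (μ : Measure Ω), IsProbabilityMeasure μ →
    ∀ w : Sym2 V → Ω → Ω → ℝ, (∀ e, GoodKernel (w e)) → (∀ e x y, 0 ≤ w e x y) →
      decDensity G μ w ^ G.edgeSet.ncard ≤ ∏ᶠ e ∈ G.edgeSet, homDensity G μ (w e)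

/-- Hatami's Hölder-type characterisation of seminorming graphs. -/
def Seminorming {V : Type} [Fintype V] (G : SimpleGraph V) : Prop :=
  ∀ (Ω : Type) (_ : MeasurableSpace Ω) (μ : Measure Ω), IsProbabilityMeasure μ →
    ∀ w : Sym2 V → Ω → Ω → ℝ, (∀ e, GoodKernel (w e)) →
      decDensity G μ w ^ G.edgeSet.ncard ≤ ∏ᶠ e ∈ G.edgeSet, |homDensity G μ (w e)|

/-- Norming: seminorming and `‖·‖_H` vanishes only on a.e.-zero kernels. -/
def Norming {V : Type} [Fintype V] (G : SimpleGraph V) : Prop :=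
  Seminorming G ∧
    ∀ (Ω : Type) (_ : MeasurableSpace Ω) (μ : Measure Ω), IsProbabilityMeasure μ →
      ∀ W : Ω → Ω → ℝ, GoodKernel W → homDensity G μ W = 0 →
        ∀ᵐ p ∂(μ.prod μ), W p.1 p.2 = 0

/-!
Test the weak-norming inequality on the fair coin `Ω = Bool`, decorating the edges inside a vertex
set `S` by the indicator of `{true} × {true}` and all other edges by `1`. If every vertex of `S`
has a neighbour in `S`, then `t(H, w) = 2^(-|S|)`, while `t(H, W_e)` is `2^(-v(H))` for the
`e(H[S])` edges inside `S` and `1` for the others, so the inequality reads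
`v(H) · e(H[S]) ≤ |S| · e(H)`. For a union `S` of components this applies to both `S` and its
complement; adding the two inequalities forces equality, and the handshake lemma turns
`e(H[S]) / |S| = e(H) / v(H)` into the statement about average degrees.
-/

open Set

section Kernel

variable {Ω : Type*}

open Classical in
noncomputable def pairIndicator (A : Set Ω) (a b : Ω) : ℝ := if a ∈ A ∧ b ∈ A then 1 else 0

lemma pairIndicator_comm (A : Set Ω) (a b : Ω) : pairIndicator A a b = pairIndicator A b a := by
  classical
  unfold pairIndicator
  exact if_congr and_comm rfl rfl

lemma goodKernel_pairIndicator [MeasurableSpace Ω] {A : Set Ω} (hA : MeasurableSet A) :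
    GoodKernel (pairIndicator A) := by
  refine ⟨Measurable.ite (hA.prod hA) measurable_const measurable_const, pairIndicator_comm A, 1,
    fun a b => ?_⟩
  unfold pairIndicator
  split_ifs <;> norm_num

lemma goodKernel_one [MeasurableSpace Ω] : GoodKernel (fun _ _ : Ω => (1 : ℝ)) :=
  ⟨measurable_const, fun _ _ => rfl, 1, fun _ _ => by norm_num⟩

end Kernel

section Graph

variable {V : Type*} (G : SimpleGraph V) {S T : Set V}

lemma SimpleGraph.edgeSet_inter_sym2_subset_sym2_iff (hS : ∀ v ∈ S, ∃ u ∈ S, G.Adj v u) :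
    G.edgeSet ∩ S.sym2 ⊆ T.sym2 ↔ S ⊆ T := by
  refine ⟨fun h v hv => ?_, fun h e he => ?_⟩
  · obtain ⟨u, hu, hvu⟩ := hS v hv
    exact (mk_mem_sym2_iff.1 (h ⟨hvu, mk_mem_sym2_iff.2 ⟨hv, hu⟩⟩)).1
  · exact mem_sym2_iff_subset.2 ((mem_sym2_iff_subset.1 he.2).trans h)

end Graph

section Decoration

variable {V Ω : Type*}

lemma sym2Val_mk {W : Ω → Ω → ℝ} (hW : ∀ a b, W a b = W b a) (x : V → Ω) (i j : V) :
    sym2Val W x s(i, j) = W (x i) (x j) := by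
  simp only [sym2Val, Sym2.lift_mk, hW (x j), add_self_div_two]

open Classical in
noncomputable def pairIndicatorOn (S : Set V) (A : Set Ω) (e : Sym2 V) : Ω → Ω → ℝ :=
  if e ∈ S.sym2 then pairIndicator A else fun _ _ => 1

lemma pairIndicatorOn_univ (A : Set Ω) (e : Sym2 V) :
    pairIndicatorOn univ A e = pairIndicator A := by
  simp [pairIndicatorOn]

lemma goodKernel_pairIndicatorOn [MeasurableSpace Ω] (S : Set V) {A : Set Ω}
    (hA : MeasurableSet A) (e : Sym2 V) : GoodKernel (pairIndicatorOn S A e) := by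
  unfold pairIndicatorOn
  split_ifs
  exacts [goodKernel_pairIndicator hA, goodKernel_one]

lemma pairIndicatorOn_nonneg (S : Set V) (A : Set Ω) (e : Sym2 V) (a b : Ω) :
    0 ≤ pairIndicatorOn S A e a b := by
  unfold pairIndicatorOn
  split_ifs
  · unfold pairIndicator
    split_ifs <;> norm_num
  · norm_num

open Classical in
lemma sym2Val_pairIndicatorOn (S : Set V) (A : Set Ω) (x : V → Ω) (e : Sym2 V) :
    sym2Val (pairIndicatorOn S A e) x e = if e ∈ S.sym2 → e ∈ (x ⁻¹' A).sym2 then 1 else 0 := by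
  induction e using Sym2.ind with
  | _ i j =>
    by_cases he : s(i, j) ∈ S.sym2
    · rw [pairIndicatorOn, if_pos he, sym2Val_mk (pairIndicator_comm A), pairIndicator]
      exact if_congr (by simp [he]) rfl rfl
    · rw [pairIndicatorOn, if_neg he, sym2Val_mk (fun _ _ => rfl), if_pos (absurd · he)]

lemma finprod_sym2Val_pairIndicatorOn [Finite V] (G : SimpleGraph V) {S : Set V}
    (hS : ∀ v ∈ S, ∃ u ∈ S, G.Adj v u) (A : Set Ω) (x : V → Ω) :
    ∏ᶠ e ∈ G.edgeSet, sym2Val (pairIndicatorOn S A e) x e = (S.pi fun _ => A).indicator 1 x := by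
  classical
  simp only [sym2Val_pairIndicatorOn, finprod_mem_eq_finite_toFinset_prod _ (toFinite _),
    Finset.prod_boole, Finite.mem_toFinset, indicator_apply, Pi.one_apply]
  refine if_congr ?_ rfl rfl
  have h := G.edgeSet_inter_sym2_subset_sym2_iff (T := x ⁻¹' A) hS
  exact ⟨fun hx => h.1 fun e he => hx e he.1 he.2, fun hx e he heS => h.2 hx ⟨he, heS⟩⟩

end Decoration

section Density

variable {V : Type} {Ω : Type*} [MeasurableSpace Ω] (μ : Measure Ω) [IsProbabilityMeasure μ]

lemma measureReal_pi_set_pi_const [Fintype V] (S : Set V) (A : Set Ω) :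
    (Measure.pi fun _ : V => μ).real (S.pi fun _ => A) = μ.real A ^ S.ncard := by
  classical
  rw [← pi_univ_ite, measureReal_def, Measure.pi_pi]
  simp only [apply_ite μ, measure_univ]
  rw [Finset.prod_ite, Finset.prod_const, Finset.prod_const_one, mul_one, ENNReal.toReal_pow,
    ← ncard_coe_finset, Finset.coe_filter]
  simp only [Finset.mem_univ, true_and, ofPred_mem_eq, measureReal_def]

lemma decDensity_pairIndicatorOn [Fintype V] (G : SimpleGraph V) {S : Set V}
    (hS : ∀ v ∈ S, ∃ u ∈ S, G.Adj v u) {A : Set Ω} (hA : MeasurableSet A) :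
    decDensity G μ (pairIndicatorOn S A) = μ.real A ^ S.ncard := by
  simp only [decDensity, finprod_sym2Val_pairIndicatorOn G hS,
    integral_indicator_one (MeasurableSet.pi (to_countable S) fun _ _ => hA),
    measureReal_pi_set_pi_const]

lemma homDensity_pairIndicator [Fintype V] {G : SimpleGraph V} (hG : ∀ v, ∃ u, G.Adj v u)
    {A : Set Ω} (hA : MeasurableSet A) :
    homDensity G μ (pairIndicator A) = μ.real A ^ Fintype.card V := by
  have h := decDensity_pairIndicatorOn μ G (S := univ) (fun v _ => by simpa using hG v) hA
  rwa [ncard_univ, Nat.card_eq_fintype_card, decDensity, funext (pairIndicatorOn_univ A)] at h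

lemma homDensity_one [Fintype V] (G : SimpleGraph V) : homDensity G μ (fun _ _ => 1) = 1 := by
  have h := decDensity_pairIndicatorOn μ G (S := ∅) (by simp) MeasurableSet.univ
  simpa [decDensity, homDensity, pairIndicatorOn] using h

lemma finprod_homDensity_pairIndicatorOn [Fintype V] {G : SimpleGraph V}
    (hG : ∀ v, ∃ u, G.Adj v u) (S : Set V) {A : Set Ω} (hA : MeasurableSet A) :
    ∏ᶠ e ∈ G.edgeSet, homDensity G μ (pairIndicatorOn S A e)
      = (μ.real A ^ Fintype.card V) ^ (G.edgeSet ∩ S.sym2).ncard := by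
  classical
  have h (e : Sym2 V) : homDensity G μ (pairIndicatorOn S A e)
      = if e ∈ S.sym2 then μ.real A ^ Fintype.card V else 1 := by
    unfold pairIndicatorOn
    split_ifs
    exacts [homDensity_pairIndicator μ hG hA, homDensity_one μ G]
  rw [finprod_mem_eq_finite_toFinset_prod _ (toFinite _)]
  simp only [h, ← Finset.prod_filter, Finset.prod_const, ← ncard_coe_finset, Finset.coe_filter,
    Finite.mem_toFinset]
  rfl

end Density

section ClosedSet

variable {V : Type*} {G : SimpleGraph V} {S : Set V}

lemma SimpleGraph.ncard_edgeSet_inter_sym2_add_compl [Finite V]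
    (hS : ∀ ⦃u v⦄, G.Adj u v → u ∈ S → v ∈ S) :
    (G.edgeSet ∩ S.sym2).ncard + (G.edgeSet ∩ Sᶜ.sym2).ncard = G.edgeSet.ncard := by
  have hdisj : Disjoint (G.edgeSet ∩ S.sym2) (G.edgeSet ∩ Sᶜ.sym2) := by
    refine Disjoint.mono inter_subset_right inter_subset_right ?_
    rw [disjoint_iff_inter_eq_empty, ← sym2_inter, inter_compl_self, sym2_empty]
  have hcover : G.edgeSet ⊆ S.sym2 ∪ Sᶜ.sym2 := by
    intro e he
    induction e using Sym2.ind with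
    | _ u v =>
      by_cases hu : u ∈ S
      · exact Or.inl ⟨hu, hS he hu⟩
      · exact Or.inr ⟨hu, fun hv => hu (hS (G.adj_symm he) hv)⟩
  rw [← ncard_union_eq hdisj (toFinite _) (toFinite _), ← inter_union_distrib_left,
    inter_eq_left.2 hcover]

lemma SimpleGraph.finsum_mem_ncard_neighborSet [Fintype V]
    (hS : ∀ ⦃u v⦄, G.Adj u v → u ∈ S → v ∈ S) :
    ∑ᶠ v ∈ S, (G.neighborSet v).ncard = 2 * (G.edgeSet ∩ S.sym2).ncard := by
  classical
  have hdeg (v : S) : (G.induce S).degree v = (G.neighborSet v).ncard := by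
    rw [degree_induce_of_neighborSet_subset (fun u hu => hS hu v.2), ← card_neighborSet_eq_degree,
      ← Nat.card_eq_fintype_card, Nat.card_coe_set_eq]
  have hedges : (G.induce S).edgeFinset.card = (G.edgeSet ∩ S.sym2).ncard := by
    rw [← Finset.card_map, map_edgeFinset_induce, ← ncard_coe_finset, Finset.coe_inter,
      Finset.coe_sym2, coe_toFinset, coe_edgeFinset]
  rw [← finsum_set_coe_eq_finsum_mem, finsum_eq_sum_of_fintype, ← hedges,
    ← sum_degrees_eq_twice_card_edges]
  exact Finset.sum_congr rfl fun v _ => (hdeg v).symm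

end ClosedSet

namespace WeaklyNorming

variable {V : Type} [Fintype V] {G : SimpleGraph V}

lemma card_mul_ncard_edgeSet_inter_sym2_le (hG : WeaklyNorming G) (hnoiso : ∀ v, ∃ u, G.Adj v u)
    {S : Set V} (hS : ∀ v ∈ S, ∃ u ∈ S, G.Adj v u) :
    Fintype.card V * (G.edgeSet ∩ S.sym2).ncard ≤ S.ncard * G.edgeSet.ncard := by
  let μ := ProbabilityTheory.uniformOn (univ : Set Bool)
  have hμ : μ.real {true} = 1 / 2 := by
    rw [measureReal_def, ProbabilityTheory.uniformOn_univ]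
    simp
  have hA : MeasurableSet {true} := measurableSet_singleton true
  have h := hG Bool _ μ inferInstance (pairIndicatorOn S {true})
    (goodKernel_pairIndicatorOn S hA) (pairIndicatorOn_nonneg S {true})
  rw [decDensity_pairIndicatorOn μ G hS hA, finprod_homDensity_pairIndicatorOn μ hnoiso S hA, hμ,
    ← pow_mul, ← pow_mul] at h
  exact (pow_le_pow_iff_right_of_lt_one₀ (by norm_num : (0 : ℝ) < 1 / 2) (by norm_num)).1 h

lemma card_mul_ncard_edgeSet_inter_sym2_eq (hG : WeaklyNorming G) (hnoiso : ∀ v, ∃ u, G.Adj v u)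
    {S : Set V} (hS : ∀ ⦃u v⦄, G.Adj u v → u ∈ S → v ∈ S) :
    Fintype.card V * (G.edgeSet ∩ S.sym2).ncard = S.ncard * G.edgeSet.ncard := by
  have hcov {T : Set V} (hT : ∀ ⦃u v⦄, G.Adj u v → u ∈ T → v ∈ T) (v : V) (hv : v ∈ T) :
      ∃ u ∈ T, G.Adj v u :=
    let ⟨u, hvu⟩ := hnoiso v
    ⟨u, hT hvu hv, hvu⟩
  have hSc : ∀ ⦃u v⦄, G.Adj u v → u ∈ Sᶜ → v ∈ Sᶜ := fun u v huv hu hv => hu (hS huv.symm hv)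
  have hle := hG.card_mul_ncard_edgeSet_inter_sym2_le hnoiso (hcov hS)
  have hle' := hG.card_mul_ncard_edgeSet_inter_sym2_le hnoiso (hcov hSc)
  have hedges := SimpleGraph.ncard_edgeSet_inter_sym2_add_compl hS
  have hverts : S.ncard + Sᶜ.ncard = Fintype.card V := by
    rw [ncard_add_ncard_compl, Nat.card_eq_fintype_card]
  have hsum : Fintype.card V * (G.edgeSet ∩ S.sym2).ncard
      + Fintype.card V * (G.edgeSet ∩ Sᶜ.sym2).ncard
      = S.ncard * G.edgeSet.ncard + Sᶜ.ncard * G.edgeSet.ncard := by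
    rw [← mul_add, hedges, ← add_mul, hverts]
  omega

end WeaklyNorming

/-- Every connected component of a weakly norming graph `H` without isolated vertices has
the same average degree, namely `2·e(H)/v(H)`. -/
theorem weaklyNorming_components_avg_degree {V : Type} [Fintype V]
    (H : SimpleGraph V) (hH : WeaklyNorming H)
    (hnoiso : ∀ v : V, ∃ u, H.Adj v u) (c : H.ConnectedComponent) :
    (∑ᶠ v ∈ c.supp, ((H.neighborSet v).ncard : ℝ)) / (c.supp.ncard : ℝ)
      = 2 * (H.edgeSet.ncard : ℝ) / (Fintype.card V : ℝ) := by
  have hclosed : ∀ ⦃u v⦄, H.Adj u v → u ∈ c.supp → v ∈ c.supp :=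
    fun _ _ huv hu => c.mem_supp_of_adj_mem_supp hu huv
  have hcount : (Fintype.card V * (H.edgeSet ∩ c.supp.sym2).ncard : ℝ)
      = c.supp.ncard * H.edgeSet.ncard := by
    exact_mod_cast hH.card_mul_ncard_edgeSet_inter_sym2_eq hnoiso hclosed
  have hc : (c.supp.ncard : ℝ) ≠ 0 := by
    exact_mod_cast (ncard_pos (toFinite _)).2 c.nonempty_supp |>.ne'
  have hV : (Fintype.card V : ℝ) ≠ 0 := by
    exact_mod_cast (Fintype.card_pos_iff.2 ⟨c.out⟩).ne'
  rw [← Nat.cast_finsum_mem (toFinite _), H.finsum_mem_ncard_neighborSet hclosed,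
    div_eq_div_iff hc hV]
  push_cast
  linear_combination 2 * hcount
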